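/- For every c ≥ 2 and k ≥ 1, fw(I_c^k D_c) = c + 2k - 1. In particular, the (c, c+2k-2)-formation obtained by concatenating alt(c, 2k-2) and I_c^c avoids I_π^k D_π for every permutation π of {1,...,c}. -/

import Mathlib

/-- The increasing sequence `1 2 ... c`. -/
def Ic (c : ℕ) : List ℕ := List.range' 1 c

/-- The decreasing sequence `c (c-1) ... 1`. -/
def Dc (c : ℕ) : List ℕ := (Ic c).reverse

/-- `k` concatenated copies of the list `l`. -/
def rep (l : List ℕ) (k : ℕ) : List ℕ := (List.replicate k l).flatten

/-- `up(c,t)`: the sequence `1 2 ... c` repeated `t` times. -/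
def upSeq (c t : ℕ) : List ℕ := rep (Ic c) t

/-- `alt(c,k)`: the concatenation of `k` permutations alternating `I_c, D_c, I_c, ...`. -/
def altSeq (c k : ℕ) : List ℕ :=
  ((List.range k).map (fun i => if i % 2 = 0 then Ic c else Dc c)).flatten

/-- A sequence `s` contains `u` if some subsequence of `s` is obtained from `u`
by an injective renaming of its letters. -/
def Contains (s u : List ℕ) : Prop :=
  ∃ f : ℕ → ℕ, Function.Injective f ∧ (u.map f).Sublist s

/-- `F` is an `(r,s)`-formation: a concatenation of `s` permutations of a set of
`r` distinct letters. -/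
def IsFormation (r s : ℕ) (F : List ℕ) : Prop :=
  ∃ (A : Finset ℕ) (ps : List (List ℕ)), A.card = r ∧ ps.length = s ∧
    (∀ p ∈ ps, p.Nodup ∧ p.toFinset = A) ∧ F = ps.flatten

/-- `F` is a binary `(r,s)`-formation: an `(r,s)`-formation in which every
constituent permutation equals a fixed permutation `p` or its reverse. -/
def IsBinaryFormation (r s : ℕ) (F : List ℕ) : Prop :=
  ∃ (A : Finset ℕ) (p : List ℕ) (ps : List (List ℕ)), A.card = r ∧
    p.Nodup ∧ p.toFinset = A ∧ ps.length = s ∧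
    (∀ q ∈ ps, q = p ∨ q = p.reverse) ∧ F = ps.flatten

/-- The formation width of `u`: the minimum `s` such that there exists `r` for which
every `(r,s)`-formation contains `u`. -/
noncomputable def fw (u : List ℕ) : ℕ :=
  sInf {s | ∃ r, ∀ F, IsFormation r s F → Contains F u}

/-- The formation length of `u`: the minimum `r` such that every `(r, fw u)`-formation
contains `u`. -/
noncomputable def fl (u : List ℕ) : ℕ :=
  sInf {r | ∀ F, IsFormation r (fw u) F → Contains F u}

/-- For a permutation `π` of `{1,...,c}`, the sequence `I_π = π(1) π(2) ... π(c)`. -/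
def Iperm {c : ℕ} (π : Equiv.Perm (Fin c)) : List ℕ :=
  List.ofFn (fun i => (π i).val + 1)

/-- `l(u)` for a sequence `u` on letters `1,...,c`: the smallest `k` such that
`up(c,k)` contains `u`. -/
noncomputable def lval (c : ℕ) (u : List ℕ) : ℕ := sInf {k | Contains (upSeq c k) u}

/-- `r(u)` for a sequence `u` on letters `1,...,c`: the smallest `k` such that
`alt(c,k)` contains `u`. -/
noncomputable def rval (c : ℕ) (u : List ℕ) : ℕ := sInf {k | Contains (altSeq c k) u}

/-- The binary formation `I_c^{e_1} D_c^{e_2} I_c^{e_3} ...` determined by the list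
of exponents `e` (blocks alternate starting with `I_c`). -/
def altBlocks (c : ℕ) (e : List ℕ) : List ℕ :=
  (e.zipIdx.map (fun p => rep (if p.2 % 2 = 0 then Ic c else Dc c) p.1)).flatten

/-!
Lower bound: embed `L^k L^R` into `alt(r, 2k-2) I_r^c` and record the block `g i` of every
letter. A copy `L_0 … L_{c-1} L_0` returns to its first letter, so it cannot stay inside one
block, and it fits into two consecutive blocks only if these have opposite directions, in which
case `L_0 < L_1` or `L_0 > L_1` according to the first of them. Hence copy `j` starts in block
`2j` or later (counting from `0`), or in block `2j - 1` when `L_0 < L_1`, so the last copy enters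
the increasing tail right at its start. There every non-ascent costs a new block, and the last
copy of `L` followed by `L^R` has at least `c` non-ascents: one more than the tail can absorb.

Upper bound: applying Erdős–Szekeres once per block to a formation on enough letters leaves `c`
letters on which every block reads the sorted word `σ` or its reverse. Among the first `2k - 1`
blocks, `k` read the same word, and the remaining `c` blocks supply its reversal letter by letter.
-/

open scoped List

lemma rep_succ (l : List ℕ) (k : ℕ) : rep l (k + 1) = l ++ rep l k := by
  simp [rep, List.replicate_succ]

lemma length_rep (l : List ℕ) (k : ℕ) : (rep l k).length = k * l.length := by
  simp [rep, List.length_flatten, List.sum_replicate]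

lemma map_rep (f : ℕ → ℕ) (l : List ℕ) (k : ℕ) : (rep l k).map f = rep (l.map f) k := by
  simp [rep, List.map_flatten]

lemma rep_sublist_rep {l : List ℕ} {k m : ℕ} (h : k ≤ m) : rep l k <+ rep l m := by
  obtain ⟨d, rfl⟩ := Nat.exists_eq_add_of_le h
  rw [rep, rep, List.replicate_add, List.flatten_append]
  exact List.sublist_append_left _ _

lemma getD_rep {l : List ℕ} {c k j i : ℕ} (hl : l.length = c) (hj : j < k) (hi : i < c) :
    (rep l k).getD (j * c + i) 0 = l.getD i 0 := by
  induction j generalizing k with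
  | zero =>
    obtain ⟨k, rfl⟩ := Nat.exists_eq_add_one_of_ne_zero (by omega : k ≠ 0)
    rw [zero_mul, zero_add, rep_succ, List.getD_append _ _ _ _ (by omega)]
  | succ j ih =>
    obtain ⟨k, rfl⟩ := Nat.exists_eq_add_one_of_ne_zero (by omega : k ≠ 0)
    rw [rep_succ, List.getD_append_right _ _ _ _ (by rw [hl, Nat.succ_mul]; omega), hl,
      show (j + 1) * c + i - c = j * c + i by rw [Nat.succ_mul]; omega]
    exact ih (by omega)

lemma Ic_length (c : ℕ) : (Ic c).length = c := List.length_range'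

lemma Ic_nodup (c : ℕ) : (Ic c).Nodup := List.nodup_range'

lemma pairwise_lt_Ic (c : ℕ) : (Ic c).Pairwise (· < ·) := List.pairwise_lt_range'

lemma pairwise_gt_Dc (c : ℕ) : (Dc c).Pairwise (· > ·) :=
  List.pairwise_reverse.2 (pairwise_lt_Ic c)

def blockRel : Bool → ℕ → ℕ → Prop
  | false => (· < ·)
  | true => (· > ·)

lemma blockRel_trans {d : Bool} {a b c : ℕ} (hab : blockRel d a b) (hbc : blockRel d b c) :
    blockRel d a c := by
  cases d
  · exact lt_trans hab hbc
  · exact lt_trans hbc hab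

lemma blockRel_irrefl (d : Bool) (a : ℕ) : ¬ blockRel d a a := by
  cases d <;> exact lt_irrefl a

lemma blockRel_not_swap (d : Bool) (a b : ℕ) : blockRel (!d) b a ↔ blockRel d a b := by
  cases d <;> rfl

/-- `g i` is the block receiving letter `i` of the word `w` in an embedding of `w` into a
concatenation of blocks, block `q` being increasing, or decreasing if `dir q`. -/
structure IsPlacement (dir : ℕ → Bool) (n : ℕ) (w g : ℕ → ℕ) : Prop where
  monotone : Monotone g
  rel_succ : ∀ i, i + 1 < n → g i = g (i + 1) → blockRel (dir (g i)) (w i) (w (i + 1))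

namespace IsPlacement

variable {dir : ℕ → Bool} {n : ℕ} {w g : ℕ → ℕ}

theorem blockRel_of_eq (hg : IsPlacement dir n w g) {x y : ℕ} (hxy : x < y) (hy : y < n)
    (h : g x = g y) : blockRel (dir (g x)) (w x) (w y) := by
  induction y, hxy using Nat.le_induction with
  | base => exact hg.rel_succ x hy h
  | succ y hxy ih =>
    have hgy : g x = g y := le_antisymm (hg.monotone (by omega)) (h ▸ hg.monotone y.le_succ)
    exact blockRel_trans (ih (by omega) hgy) (hgy ▸ hg.rel_succ y hy (hgy ▸ h))

theorem lt_of_eq (hg : IsPlacement dir n w g) {x y : ℕ} (hxy : x < y) (hy : y < n)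
    (h : w x = w y) : g x < g y := by
  refine (hg.monotone hxy.le).lt_of_ne fun hgxy => blockRel_irrefl (dir (g x)) (w x) ?_
  simpa only [h] using hg.blockRel_of_eq hxy hy hgxy

theorem lt_succ_of_not_blockRel (hg : IsPlacement dir n w g) {i : ℕ} (hi : i + 1 < n)
    (h : ¬ blockRel (dir (g i)) (w i) (w (i + 1))) : g i < g (i + 1) :=
  (hg.monotone i.le_succ).lt_of_ne fun he => h (hg.rel_succ i hi he)

theorem blockRel_of_le_succ (hg : IsPlacement dir n w g) {x y : ℕ} (hxy : x + 1 < y)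
    (hy : y < n) (hw : w x = w y) (hgy : g y ≤ g x + 1) (hdir : dir (g x + 1) = !dir (g x)) :
    blockRel (dir (g x)) (w x) (w (x + 1)) := by
  by_contra h
  have hx1 := hg.lt_succ_of_not_blockRel (by omega) h
  have hx1y := hg.monotone (show x + 1 ≤ y by omega)
  have := hg.blockRel_of_eq hxy hy (by omega)
  rw [show g (x + 1) = g x + 1 by omega, hdir, ← hw, blockRel_not_swap] at this
  exact h this

end IsPlacement

theorem exists_isPlacement_of_sublist (bs : List (List ℕ)) (dir : ℕ → Bool)
    (hbs : ∀ q (hq : q < bs.length), bs[q].Pairwise (blockRel (dir q))) {v : List ℕ}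
    (hv : v <+ bs.flatten) :
    ∃ g, IsPlacement dir v.length (fun i => v.getD i 0) g ∧ ∀ i < v.length, g i < bs.length := by
  induction bs generalizing dir v with
  | nil =>
    obtain rfl : v = [] := List.sublist_nil.1 hv
    exact ⟨fun _ => 0, ⟨monotone_const, by simp⟩, by simp⟩
  | cons b bs ih =>
    obtain ⟨v₁, v₂, rfl, h₁, h₂⟩ := List.sublist_append_iff.1 hv
    obtain ⟨g, hg, hgb⟩ := ih (fun q => dir (q + 1)) (fun q hq => hbs (q + 1) (by simpa)) h₂
    have hv₁ : v₁.Pairwise (blockRel (dir 0)) := (hbs 0 (by simp)).sublist h₁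
    refine ⟨fun i => if i < v₁.length then 0 else g (i - v₁.length) + 1, ⟨?_, ?_⟩, ?_⟩
    · intro i j hij
      dsimp only
      split_ifs <;> first | omega | exact Nat.succ_le_succ (hg.monotone (by omega))
    · intro i hi hgi
      simp only [List.length_append] at hi
      by_cases hi₁ : i + 1 < v₁.length
      · simp only [if_pos (show i < v₁.length by omega), List.getD_append _ _ _ _ hi₁,
          List.getD_append _ _ _ _ (show i < v₁.length by omega),
          List.getD_eq_getElem _ _ hi₁, List.getD_eq_getElem _ _ (show i < v₁.length by omega)]
        exact List.pairwise_iff_getElem.1 hv₁ i (i + 1) _ _ (lt_add_one i)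
      · have hi₁' : ¬ i < v₁.length := fun h => by simp [h, hi₁] at hgi
        simp only [if_neg hi₁', if_neg hi₁, add_left_inj] at hgi ⊢
        have hshift : i + 1 - v₁.length = i - v₁.length + 1 := by omega
        rw [hshift] at hgi
        rw [List.getD_append_right _ _ _ _ (by omega), List.getD_append_right _ _ _ _ (by omega),
          hshift]
        exact hg.rel_succ _ (by omega) hgi
    · intro i hi
      simp only [List.length_append, List.length_cons] at hi ⊢
      split_ifs
      · omega
      · exact Nat.succ_lt_succ (hgb _ (by omega))

/-- Whether block `q` (counted from `0`) of `alt(r, 2k-2) I_r^c` is decreasing. -/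
def altDir (k q : ℕ) : Bool := decide (q % 2 = 1 ∧ q < 2 * k - 2)

lemma altDir_succ {k q : ℕ} (hq : q < 2 * k - 2) : altDir k (q + 1) = !altDir k q := by
  rw [Bool.eq_iff_iff]
  simp only [altDir, Bool.not_eq_true', decide_eq_true_eq, decide_eq_false_iff_not]
  omega

lemma altDir_of_le {k q : ℕ} (hq : 2 * k - 2 ≤ q) : altDir k q = false := by
  simp only [altDir, decide_eq_false_iff_not, not_and]
  omega

section LowerBound

variable {c k : ℕ} {ℓ w g : ℕ → ℕ}

theorem copy_start_bound (hc : 2 ≤ c) (hcopy : ∀ j < k, ∀ i < c, w (j * c + i) = ℓ i)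
    (hg : IsPlacement (altDir k) ((k + 1) * c) w g) :
    ∀ j < k, 2 * j ≤ g (j * c) + 1 ∧ (g (j * c) + 1 = 2 * j → ℓ 0 < ℓ 1) := by
  intro j
  induction j with
  | zero => intro _; omega
  | succ j ih =>
    intro hj
    obtain ⟨hstart, hasc⟩ := ih (by omega)
    have hw₀ : w (j * c) = ℓ 0 := hcopy j (by omega) 0 (by omega)
    have hw₁ : w (j * c + 1) = ℓ 1 := hcopy j (by omega) 1 (by omega)
    have hw : w (j * c) = w ((j + 1) * c) := by
      rw [hw₀, ← hcopy (j + 1) hj 0 (by omega), add_zero]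
    have hy : (j + 1) * c < (k + 1) * c := Nat.mul_lt_mul_of_pos_right (by omega) (by omega)
    have hxy : j * c + 1 < (j + 1) * c := by rw [Nat.succ_mul]; omega
    have hadv := hg.lt_of_eq (by omega) hy hw
    have hwindow : g ((j + 1) * c) = g (j * c) + 1 → g (j * c) < 2 * k - 2 →
        blockRel (altDir k (g (j * c))) (ℓ 0) (ℓ 1) := fun hnext hslot => by
      rw [← hw₀, ← hw₁]
      exact hg.blockRel_of_le_succ hxy hy hw hnext.le (altDir_succ hslot)
    rcases Nat.lt_or_ge (g (j * c)) (2 * k - 2) with hslot | hslot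
    · by_cases hnext : g ((j + 1) * c) = g (j * c) + 1
      · have hdir := hwindow hnext hslot
        by_cases hodd : g (j * c) % 2 = 1
        · simp only [altDir, hodd, hslot, and_self, decide_true, blockRel] at hdir
          omega
        · simp only [altDir, hodd, false_and, decide_false, blockRel] at hdir
          omega
      · omega
    · omega

theorem lt_succ_of_tail (hg : IsPlacement (altDir k) ((k + 1) * c) w g) {x : ℕ}
    (hx : x + 1 < (k + 1) * c) (hslot : 2 * k - 2 ≤ g x) (h : ¬ w x < w (x + 1)) :
    g x < g (x + 1) :=
  hg.lt_succ_of_not_blockRel hx (by rwa [altDir_of_le hslot])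

/-- Once the last copy has reached the increasing tail, each pair `ℓ i, ℓ (i+1)` costs a new
block, either inside that copy or, reversed, inside the closing reversed copy. -/
theorem le_mirror_of_tail (hcopy : ∀ j < k, ∀ i < c, w (j * c + i) = ℓ i)
    (htail : ∀ s < c, w (k * c + s) = ℓ (c - 1 - s))
    (hg : IsPlacement (altDir k) ((k + 1) * c) w g) (hk : 1 ≤ k) :
    ∀ i < c, 2 * k - 2 ≤ g ((k - 1) * c + i) →
      g ((k - 1) * c + i) + (c - i) ≤ g (k * c + (c - 1 - i)) := by
  have hkc : (k - 1) * c + c = k * c := by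
    rw [← Nat.succ_mul, Nat.succ_eq_add_one, Nat.sub_add_cancel hk]
  have hn : (k + 1) * c = k * c + c := Nat.succ_mul k c
  have hw : ∀ i < c, w ((k - 1) * c + i) = ℓ i := hcopy (k - 1) (by omega)
  intro i hi hslot
  obtain ⟨d, hd⟩ : ∃ d, c - 1 - i = d := ⟨_, rfl⟩
  induction d generalizing i with
  | zero =>
    have hjoin : (k - 1) * c + i + 1 = k * c + 0 := by omega
    have := lt_succ_of_tail hg (by omega) hslot (by
      rw [hjoin, htail 0 (by omega), hw i hi, show c - 1 - 0 = i by omega]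
      exact lt_irrefl _)
    rw [hjoin] at this
    rw [show c - 1 - i = 0 by omega]
    omega
  | succ d ih =>
    have hnext : 2 * k - 2 ≤ g ((k - 1) * c + (i + 1)) := hslot.trans (hg.monotone (by omega))
    have ih' := ih (i + 1) (by omega) hnext (by omega)
    have hstep : k * c + (c - 1 - (i + 1)) + 1 = k * c + (c - 1 - i) := by omega
    by_cases hasc : ℓ i < ℓ (i + 1)
    · have hdesc := lt_succ_of_tail hg (x := k * c + (c - 1 - (i + 1))) (by omega)
        (hnext.trans (by omega)) (by
          rw [hstep, htail _ (by omega), htail _ (by omega), show c - 1 - (c - 1 - i) = i by omega,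
            show c - 1 - (c - 1 - (i + 1)) = i + 1 by omega]
          omega)
      have := hg.monotone (show (k - 1) * c + i ≤ (k - 1) * c + (i + 1) by omega)
      rw [hstep] at hdesc
      omega
    · have hnonasc := lt_succ_of_tail hg (x := (k - 1) * c + i) (by omega) hslot (by
        rw [hw i hi, show (k - 1) * c + i + 1 = (k - 1) * c + (i + 1) by omega, hw _ (by omega)]
        exact hasc)
      have := hg.monotone (show k * c + (c - 1 - (i + 1)) ≤ k * c + (c - 1 - i) by omega)
      rw [show (k - 1) * c + i + 1 = (k - 1) * c + (i + 1) by omega] at hnonasc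
      omega

theorem le_placement_last (hc : 2 ≤ c) (hk : 1 ≤ k)
    (hcopy : ∀ j < k, ∀ i < c, w (j * c + i) = ℓ i)
    (htail : ∀ s < c, w (k * c + s) = ℓ (c - 1 - s))
    (hg : IsPlacement (altDir k) ((k + 1) * c) w g) :
    2 * k - 2 + c ≤ g ((k + 1) * c - 1) := by
  obtain ⟨hstart, hasc⟩ := copy_start_bound hc hcopy hg (k - 1) (by omega)
  have hkc : (k - 1) * c + c = k * c := by
    rw [← Nat.succ_mul, Nat.succ_eq_add_one, Nat.sub_add_cancel hk]
  have hn : (k + 1) * c = k * c + c := Nat.succ_mul k c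
  have hw : ∀ i < c, w ((k - 1) * c + i) = ℓ i := hcopy (k - 1) (by omega)
  have hmirror := le_mirror_of_tail hcopy htail hg hk
  by_cases h01 : ℓ 0 < ℓ 1
  · have hslot : 2 * k - 2 ≤ g ((k - 1) * c + 1) := by
      rcases Nat.lt_or_ge (g ((k - 1) * c)) (2 * k - 2) with hlow | hhigh
      · -- the last copy starts in the final decreasing block, where `ℓ 0 < ℓ 1` cannot stay
        have hdec : altDir k (g ((k - 1) * c)) = true := by
          simp only [altDir, decide_eq_true_eq]
          omega
        have := hg.lt_succ_of_not_blockRel (i := (k - 1) * c) (by omega) (by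
          rw [hdec, ← add_zero ((k - 1) * c), hw 0 (by omega), add_assoc, hw 1 (by omega)]
          exact h01.asymm)
        omega
      · exact hhigh.trans (hg.monotone (by omega))
    have hlast := lt_succ_of_tail hg (x := k * c + (c - 1 - 1)) (by omega)
      ((hmirror 1 (by omega) hslot).trans' (by omega)) (by
        rw [show k * c + (c - 1 - 1) + 1 = k * c + (c - 1) by omega, htail _ (by omega),
          htail _ (by omega), show c - 1 - (c - 1 - 1) = 1 by omega, Nat.sub_self]
        exact h01.asymm)
    rw [show k * c + (c - 1 - 1) + 1 = (k + 1) * c - 1 by omega] at hlast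
    have := hmirror 1 (by omega) hslot
    omega
  · have hslot : 2 * k - 2 ≤ g ((k - 1) * c + 0) := by
      rw [add_zero]
      omega
    have := hmirror 0 (by omega) hslot
    rw [show k * c + (c - 1 - 0) = (k + 1) * c - 1 by omega] at this
    omega

end LowerBound

def avoidingBlocks (r c k : ℕ) : List (List ℕ) :=
  (List.range (2 * k - 2 + c)).map fun q => if altDir k q then Dc r else Ic r

lemma flatten_avoidingBlocks (r c k : ℕ) :
    (avoidingBlocks r c k).flatten = altSeq r (2 * k - 2) ++ rep (Ic r) c := by
  rw [avoidingBlocks, List.range_add, List.map_append, List.flatten_append, List.map_map, altSeq,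
    rep]
  congr 2
  · refine List.map_congr_left fun q hq => ?_
    have hq := List.mem_range.1 hq
    by_cases hodd : q % 2 = 1
    · simp [altDir, hodd, hq]
    · simp [altDir, show q % 2 = 0 by omega]
  · simp [Function.comp_def, altDir_of_le (Nat.le_add_right _ _), List.map_const']

theorem not_sublist_avoidingBlocks {c k : ℕ} (hc : 2 ≤ c) (hk : 1 ≤ k) (r : ℕ) {L : List ℕ}
    (hL : L.length = c) : ¬ (rep L k ++ L.reverse) <+ (avoidingBlocks r c k).flatten := by
  intro h
  obtain ⟨g, hg, hlt⟩ := exists_isPlacement_of_sublist _ (altDir k) (fun q hq => by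
    simp only [avoidingBlocks, List.getElem_map, List.getElem_range]
    cases altDir k q
    · exact pairwise_lt_Ic r
    · exact pairwise_gt_Dc r) h
  have hlen : (rep L k ++ L.reverse).length = (k + 1) * c := by
    rw [List.length_append, length_rep, List.length_reverse, hL, Nat.succ_mul]
  rw [hlen] at hg hlt
  have hlast := le_placement_last (ℓ := fun i => L.getD i 0) hc hk
    (fun j hj i hi => by
      rw [List.getD_append _ _ _ _ (by rw [length_rep, hL]; nlinarith), getD_rep hL hj hi])
    (fun s hs => by
      rw [List.getD_append_right _ _ _ _ (by rw [length_rep, hL]; omega), length_rep, hL,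
        Nat.add_sub_cancel_left, List.getD_reverse _ (by omega), hL])
    hg
  have := hlt ((k + 1) * c - 1) (by rw [Nat.succ_mul]; omega)
  simp only [avoidingBlocks, List.length_map, List.length_range] at this
  omega

theorem exists_monotone_sublist (a b : ℕ) {l : List ℕ} (hl : l.Nodup)
    (hlen : (a + b).choose a ≤ l.length) :
    ∃ s, s <+ l ∧ (s.length = a ∧ s.Pairwise (· < ·) ∨ s.length = b ∧ s.Pairwise (· > ·)) := by
  induction a generalizing b l with
  | zero => exact ⟨[], List.nil_sublist l, Or.inl ⟨rfl, List.Pairwise.nil⟩⟩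
  | succ a iha =>
    induction b generalizing l with
    | zero => exact ⟨[], List.nil_sublist l, Or.inr ⟨rfl, List.Pairwise.nil⟩⟩
    | succ b ihb =>
      obtain _ | ⟨x, t⟩ := l
      · exact absurd hlen (Nat.not_le.2 (Nat.choose_pos (by omega)))
      obtain ⟨hx, ht⟩ := List.nodup_cons.1 hl
      have hsplit := List.length_eq_length_filter_add (fun y => decide (x < y)) (l := t)
      have hchoose : (a + 1 + (b + 1)).choose (a + 1)
          = (a + (b + 1)).choose a + (a + 1 + b).choose (a + 1) := by
        rw [show a + 1 + (b + 1) = a + (b + 1) + 1 by omega, Nat.choose_succ_succ,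
          show a + (b + 1) = a + 1 + b by omega]
      rw [hchoose, List.length_cons] at hlen
      -- `x` extends increasing runs above it and decreasing runs below it
      rcases (by omega : (a + (b + 1)).choose a ≤ (t.filter fun y => decide (x < y)).length ∨
          (a + 1 + b).choose (a + 1) ≤ (t.filter fun y => !decide (x < y)).length) with hup | hdown
      · obtain ⟨s, hs, h⟩ := iha (b + 1) (ht.filter _) hup
        have hst := hs.trans List.filter_sublist
        rcases h with ⟨hlen, hinc⟩ | hdec
        · refine ⟨x :: s, hst.cons_cons x, Or.inl ⟨by simp [hlen], List.pairwise_cons.2 ⟨?_, hinc⟩⟩⟩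
          intro y hy
          simpa using List.of_mem_filter (hs.subset hy)
        · exact ⟨s, hst.cons x, Or.inr hdec⟩
      · obtain ⟨s, hs, h⟩ := ihb (ht.filter _) hdown
        have hst := hs.trans List.filter_sublist
        rcases h with hinc | ⟨hlen, hdec⟩
        · exact ⟨s, hst.cons x, Or.inl hinc⟩
        · refine ⟨x :: s, hst.cons_cons x, Or.inr ⟨by simp [hlen], List.pairwise_cons.2 ⟨?_, hdec⟩⟩⟩
          intro y hy
          have hyx : y ≠ x := fun h => hx (h ▸ hst.subset hy)
          have := List.of_mem_filter (hs.subset hy)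
          simp only [Bool.not_eq_true', decide_eq_false_iff_not, not_lt] at this
          omega

/-- Enough letters for `n` successive Erdős–Szekeres steps to leave `c` of them. -/
def formationBound (c : ℕ) : ℕ → ℕ
  | 0 => c
  | n + 1 => (formationBound c n + formationBound c n).choose (formationBound c n)

def ListsMonotonically (p : List ℕ) (S : Finset ℕ) : Prop :=
  ∃ s, s <+ p ∧ s.toFinset = S ∧ (s.Pairwise (· < ·) ∨ s.Pairwise (· > ·))

lemma ListsMonotonically.mono {p : List ℕ} {S T : Finset ℕ} (h : ListsMonotonically p T)
    (hST : S ⊆ T) : ListsMonotonically p S := by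
  obtain ⟨s, hs, rfl, hmono⟩ := h
  refine ⟨s.filter (· ∈ S), List.filter_sublist.trans hs, ?_,
    hmono.imp (·.sublist List.filter_sublist) (·.sublist List.filter_sublist)⟩
  ext x
  simpa using fun hx => List.mem_toFinset.1 (hST hx)

theorem exists_subset_listsMonotonically (c : ℕ) (ps : List (List ℕ)) (T : Finset ℕ)
    (hT : ∀ p ∈ ps, T ⊆ p.toFinset) (hcard : formationBound c ps.length ≤ T.card) :
    ∃ S ⊆ T, S.card = c ∧ ∀ p ∈ ps, ListsMonotonically p S := by
  induction ps generalizing T with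
  | nil => simpa [formationBound] using Finset.exists_subset_card_eq hcard
  | cons p ps ih =>
    set m := formationBound c ps.length
    set l := (p.filter (· ∈ T)).dedup
    have hlT : l.toFinset = T := by
      ext x
      simpa [l] using fun hx => List.mem_toFinset.1 (hT p List.mem_cons_self hx)
    have hlen : l.length = T.card := by rw [← hlT, List.toFinset_card_of_nodup (List.nodup_dedup _)]
    obtain ⟨s, hsl, hmono⟩ := exists_monotone_sublist m m (List.nodup_dedup _)
      (by rw [hlen]; exact hcard)
    have hs : s.Nodup ∧ s.length = m := by
      rcases hmono with ⟨hlen, hinc⟩ | ⟨hlen, hdec⟩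
      · exact ⟨hinc.nodup, hlen⟩
      · exact ⟨hdec.nodup, hlen⟩
    have hsT : s.toFinset ⊆ T := fun x hx =>
      hlT ▸ List.mem_toFinset.2 (hsl.subset (List.mem_toFinset.1 hx))
    obtain ⟨S, hSs, hS, hps⟩ := ih s.toFinset
      (fun q hq => hsT.trans (hT q (List.mem_cons_of_mem p hq)))
      (by rw [List.toFinset_card_of_nodup hs.1, hs.2])
    refine ⟨S, hSs.trans hsT, hS, fun q hq => ?_⟩
    rcases List.mem_cons.1 hq with rfl | hq
    · refine ListsMonotonically.mono ⟨s, ?_, rfl, hmono.imp (·.2) (·.2)⟩ hSs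
      exact hsl.trans ((List.dedup_sublist _).trans List.filter_sublist)
    · exact hps q hq

lemma sublist_flatten_of_forall_mem {l : List ℕ} {qs : List (List ℕ)} (hlen : l.length ≤ qs.length)
    (hmem : ∀ q ∈ qs, ∀ x ∈ l, x ∈ q) : l <+ qs.flatten := by
  induction l generalizing qs with
  | nil => exact List.nil_sublist _
  | cons x l ih =>
    obtain _ | ⟨q, qs⟩ := qs
    · simp at hlen
    · exact (List.singleton_sublist.2 (hmem q List.mem_cons_self x List.mem_cons_self)).append
        (ih (by simpa using hlen) fun q' hq' y hy => hmem q' (List.mem_cons_of_mem q hq') y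
          (List.mem_cons_of_mem x hy))

lemma rep_sublist_flatten {m : List ℕ} {qs : List (List ℕ)} (h : ∀ q ∈ qs, m <+ q) :
    rep m qs.length <+ qs.flatten := by
  induction qs with
  | nil => exact List.nil_sublist _
  | cons q qs ih =>
    rw [List.length_cons, rep_succ, List.flatten_cons]
    exact (h q List.mem_cons_self).append (ih fun q' hq' => h q' (List.mem_cons_of_mem q hq'))

/-- Among the first `2k - 1` blocks, `k` contain `m` or `k` contain `m.reverse`; the next
`m.length` blocks then supply the reversed word one letter each. -/
theorem rep_append_reverse_sublist_flatten {k : ℕ} {m : List ℕ} {ps : List (List ℕ)}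
    (hps : 2 * k - 1 + m.length ≤ ps.length) (hdir : ∀ p ∈ ps, m <+ p ∨ m.reverse <+ p)
    (hmem : ∀ p ∈ ps, ∀ x ∈ m, x ∈ p) :
    rep m k ++ m.reverse <+ ps.flatten ∨ rep m.reverse k ++ m <+ ps.flatten := by
  set qs := ps.take (2 * k - 1)
  have hqs : qs.length = 2 * k - 1 := by simp [qs]; omega
  have hsplit := List.length_eq_length_filter_add (fun q => decide (m <+ q)) (l := qs)
  have htail : ∀ l : List ℕ, l.length = m.length → (∀ x ∈ l, x ∈ m) →
      l <+ (ps.drop (2 * k - 1)).flatten := fun l hl hlm =>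
    sublist_flatten_of_forall_mem (by simp; omega)
      fun q hq x hx => hmem q (List.mem_of_mem_drop hq) x (hlm x hx)
  rw [← List.take_append_drop (2 * k - 1) ps, List.flatten_append]
  rcases (by omega : k ≤ (qs.filter fun q => decide (m <+ q)).length ∨
      k ≤ (qs.filter fun q => !decide (m <+ q)).length) with hinc | hdec
  · refine .inl (.append ?_ (htail _ List.length_reverse fun x => List.mem_reverse.1))
    refine (rep_sublist_rep hinc).trans ((rep_sublist_flatten fun q hq => ?_).trans
      List.filter_sublist.flatten)
    simpa using List.of_mem_filter hq
  · refine .inr (.append ?_ (htail _ rfl fun _ => id))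
    refine (rep_sublist_rep hdec).trans ((rep_sublist_flatten fun q hq => ?_).trans
      List.filter_sublist.flatten)
    have hq' := List.mem_of_mem_take (List.mem_of_mem_filter hq)
    simpa using (hdir q hq').resolve_left (by simpa using List.of_mem_filter hq)

lemma exists_injective_map_Ic {m : List ℕ} (hm : m.Nodup) :
    ∃ f : ℕ → ℕ, Function.Injective f ∧ (Ic m.length).map f = m := by
  refine ⟨fun i => if 1 ≤ i ∧ i ≤ m.length then m.getD (i - 1) 0 else m.sum + i + 1,
    fun i j hij => ?_, List.ext_getElem (by simp [Ic_length]) fun t ht _ => ?_⟩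
  · have hbound : ∀ t, 1 ≤ t ∧ t ≤ m.length → m.getD (t - 1) 0 ≤ m.sum := fun t ht =>
      List.le_sum_of_mem (List.getD_eq_getElem m 0 (show t - 1 < m.length by omega) ▸
        List.getElem_mem _)
    dsimp only at hij
    split_ifs at hij with hi hj hj
    · rw [List.getD_eq_getElem _ _ (by omega), List.getD_eq_getElem _ _ (by omega),
        hm.getElem_inj_iff] at hij
      omega
    · have := hbound i hi
      omega
    · have := hbound j hj
      omega
    · omega
  · rw [List.length_map, Ic_length] at ht
    simp [Ic, List.getElem_range', show 1 ≤ 1 + t ∧ 1 + t ≤ m.length by omega,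
      List.getElem?_eq_getElem ht]

lemma sort_toFinset_of_pairwise {s : List ℕ} (h : s.Pairwise (· < ·)) :
    s.toFinset.sort (· ≤ ·) = s :=
  (List.toFinset_sort _ h.nodup).2 (h.imp le_of_lt)

lemma contains_of_rep_append_reverse_sublist {F m : List ℕ} {k : ℕ} (hm : m.Nodup)
    (h : rep m k ++ m.reverse <+ F) : Contains F (rep (Ic m.length) k ++ Dc m.length) := by
  obtain ⟨f, hf, hfm⟩ := exists_injective_map_Ic hm
  exact ⟨f, hf, by rwa [List.map_append, map_rep, Dc, List.map_reverse, hfm]⟩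

theorem contains_of_isFormation {c k : ℕ} (hk : 1 ≤ k) {F : List ℕ}
    (hF : IsFormation (formationBound c (c + 2 * k - 1)) (c + 2 * k - 1) F) :
    Contains F (rep (Ic c) k ++ Dc c) := by
  obtain ⟨A, ps, hA, hlen, hps, rfl⟩ := hF
  obtain ⟨S, hSA, hS, hmono⟩ := exists_subset_listsMonotonically c ps A
    (fun p hp => (hps p hp).2.ge) (by rw [hlen, hA])
  set σ := S.sort (· ≤ ·) with hσdef
  have hσ : σ.Nodup := S.sort_nodup _
  have hσlen : σ.length = c := by rw [Finset.length_sort, hS]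
  have hdir : ∀ p ∈ ps, σ <+ p ∨ σ.reverse <+ p := fun p hp => by
    obtain ⟨s, hs, hsS, hinc | hdec⟩ := hmono p hp
    · rw [hσdef, ← hsS, sort_toFinset_of_pairwise hinc]
      exact .inl hs
    · rw [hσdef, ← hsS, ← List.toFinset_reverse,
        sort_toFinset_of_pairwise (List.pairwise_reverse.2 hdec), List.reverse_reverse]
      exact .inr hs
  have hmem : ∀ p ∈ ps, ∀ x ∈ σ, x ∈ p := fun p hp x hx =>
    List.mem_toFinset.1 ((hps p hp).2 ▸ hSA (Finset.mem_sort _ |>.1 hx))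
  rcases rep_append_reverse_sublist_flatten (k := k) (by omega) hdir hmem with h | h
  · simpa [hσlen] using contains_of_rep_append_reverse_sublist hσ h
  · have h' : rep σ.reverse k ++ σ.reverse.reverse <+ ps.flatten := by rwa [List.reverse_reverse]
    simpa [hσlen] using contains_of_rep_append_reverse_sublist (List.nodup_reverse.2 hσ) h'

theorem fw_eq_of_bounds {u : List ℕ} {s : ℕ} (hup : ∃ r, ∀ F, IsFormation r s F → Contains F u)
    (hlow : ∀ s' < s, ∀ r, ∃ F, IsFormation r s' F ∧ ¬ Contains F u) : fw u = s :=
  le_antisymm (Nat.sInf_le hup) <| le_csInf ⟨s, hup⟩ fun s' ⟨r, hr⟩ => not_lt.1 fun hs' =>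
    let ⟨F, hF, hnot⟩ := hlow s' hs' r
    hnot (hr F hF)

theorem isFormation_take_avoidingBlocks (r c k x : ℕ) (hx : x ≤ 2 * k - 2 + c) :
    IsFormation r x ((avoidingBlocks r c k).take x).flatten := by
  refine ⟨(Ic r).toFinset, _, by rw [List.toFinset_card_of_nodup (Ic_nodup r), Ic_length],
    by simp [avoidingBlocks]; omega, fun p hp => ?_, rfl⟩
  obtain ⟨q, -, rfl⟩ := List.mem_map.1 (List.mem_of_mem_take hp)
  split
  · exact ⟨List.nodup_reverse.2 (Ic_nodup r), List.toFinset_reverse⟩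
  · exact ⟨Ic_nodup r, rfl⟩

theorem stmt19 (c k : ℕ) (hc : 2 ≤ c) (hk : 1 ≤ k) :
    fw (rep (Ic c) k ++ Dc c) = c + 2 * k - 1 ∧
    ∀ π : Equiv.Perm (Fin c),
      ¬ (rep (Iperm π) k ++ (Iperm π).reverse).Sublist
          (altSeq c (2 * k - 2) ++ rep (Ic c) c) := by
  refine ⟨fw_eq_of_bounds ⟨_, fun F => contains_of_isFormation hk⟩ fun x hx r =>
    ⟨_, isFormation_take_avoidingBlocks r c k x (by omega), ?_⟩, fun π h => ?_⟩
  · rintro ⟨f, -, hf⟩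
    rw [List.map_append, map_rep, Dc, List.map_reverse] at hf
    exact not_sublist_avoidingBlocks hc hk r (by rw [List.length_map, Ic_length])
      (hf.trans (List.take_sublist _ _).flatten)
  · exact not_sublist_avoidingBlocks hc hk c (List.length_ofFn) (by rwa [flatten_avoidingBlocks])
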